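/- arXiv:1403.0540 — 6 statements merged into one kernel-verified Lean document; each statement's English description precedes it below -/
import Mathlib

section
/- A finite tree admits a perfect matching if and only if every vertex belongs to every maximum matching and is always covered by the same edge in every maximum matching (i.e., all vertices are 'orange' in the canonical coloring). -/
open scoped Classical

/-- A matching of a graph `G`: a set of edges of `G`, pairwise vertex-disjoint. -/
def IsMatching {V : Type} (G : SimpleGraph V) (M : Finset (Sym2 V)) : Prop :=
  (∀ e ∈ M, e ∈ G.edgeSet) ∧
  ∀ e ∈ M, ∀ f ∈ M, e ≠ f → ∀ v : V, v ∈ e → v ∉ f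

/-- A vertex is covered by a matching if it belongs to some edge of it. -/
def Covers {V : Type} (M : Finset (Sym2 V)) (v : V) : Prop := ∃ e ∈ M, v ∈ e

/-- A maximum matching: a matching of maximal cardinality. -/
def IsMaxMatching {V : Type} [Fintype V] (G : SimpleGraph V) (M : Finset (Sym2 V)) : Prop :=
  IsMatching G M ∧ ∀ M' : Finset (Sym2 V), IsMatching G M' → M'.card ≤ M.card

/-- An orange vertex: it is covered by every maximum matching, always by the same edge. -/
def IsOrangeVertex {V : Type} [Fintype V] (G : SimpleGraph V) (v : V) : Prop :=
  ∃ e : Sym2 V, ∀ M : Finset (Sym2 V), IsMaxMatching G M → e ∈ M ∧ v ∈ e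

/-!
A matching with `m` edges covers exactly `2m` vertices, so as soon as a graph has a perfect
matching, every maximum matching is perfect. In a forest there is at most one perfect matching:
if the edge `ab` lies in a perfect matching `M` but not in another one `M'`, let `A` be the set of
vertices reachable from `a` once the bridge `ab` is deleted. Every vertex of `A` is matched inside
`A` by `M'`, and every vertex of `A \ {a}` is matched inside `A \ {a}` by `M`, so `|A|` would be
both even and odd. Hence in a tree with a perfect matching all maximum matchings coincide and
every vertex is orange; conversely, if all vertices are orange, any maximum matching is perfect.
-/

open Finset

variable {V : Type} {G : SimpleGraph V}

def IsPerfectMatching (G : SimpleGraph V) (M : Finset (Sym2 V)) : Prop :=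
  IsMatching G M ∧ ∀ v, Covers M v

lemma SimpleGraph.reachable_of_mem_edgeSet {e : Sym2 V} (he : e ∈ G.edgeSet) {v w : V}
    (hv : v ∈ e) (hw : w ∈ e) : G.Reachable v w := by
  induction e with
  | h a b =>
    have hab : G.Adj a b := he
    rcases Sym2.mem_iff.mp hv with rfl | rfl <;> rcases Sym2.mem_iff.mp hw with rfl | rfl
    exacts [.refl _, hab.reachable, hab.symm.reachable, .refl _]

namespace IsMatching

variable {M : Finset (Sym2 V)}

lemma card_biUnion_toFinset (hM : IsMatching G M) {N : Finset (Sym2 V)} (hN : N ⊆ M) :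
    #(N.biUnion Sym2.toFinset) = 2 * #N := by
  rw [card_biUnion fun e he f hf hef => disjoint_left.mpr fun v hve hvf =>
    hM.2 e (hN he) f (hN hf) hef v (Sym2.mem_toFinset.mp hve) (Sym2.mem_toFinset.mp hvf)]
  rw [sum_congr rfl fun e he =>
    Sym2.card_toFinset_of_not_isDiag e (G.not_isDiag_of_mem_edgeSet (hM.1 e (hN he))),
    sum_const, smul_eq_mul, mul_comm]

lemma even_card_of_forall_matched_within (hM : IsMatching G M) {S : Finset V}
    (hS : ∀ v ∈ S, ∃ e ∈ M, v ∈ e ∧ ∀ w ∈ e, w ∈ S) : Even #S := by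
  have hS_eq : S = (M.filter fun e => ∀ w ∈ e, w ∈ S).biUnion Sym2.toFinset := by
    ext v
    simp only [mem_biUnion, mem_filter, Sym2.mem_toFinset]
    constructor
    · intro hv
      obtain ⟨e, he, hve, heS⟩ := hS v hv
      exact ⟨e, ⟨he, heS⟩, hve⟩
    · rintro ⟨e, ⟨-, heS⟩, hve⟩
      exact heS v hve
  rw [hS_eq, hM.card_biUnion_toFinset (filter_subset _ _)]
  exact even_two_mul _

variable [Fintype V]

lemma covers_all_iff_two_mul_card_eq (hM : IsMatching G M) :
    (∀ v, Covers M v) ↔ 2 * #M = Fintype.card V := by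
  rw [← hM.card_biUnion_toFinset subset_rfl, card_eq_iff_eq_univ, eq_univ_iff_forall]
  simp only [mem_biUnion, Sym2.mem_toFinset, Covers]

lemma two_mul_card_le (hM : IsMatching G M) : 2 * #M ≤ Fintype.card V :=
  hM.card_biUnion_toFinset subset_rfl ▸ card_le_univ _

end IsMatching

lemma exists_isMaxMatching [Fintype V] (G : SimpleGraph V) : ∃ M, IsMaxMatching G M := by
  have hempty : IsMatching G ∅ := ⟨by simp, by simp⟩
  obtain ⟨M, hM, hmax⟩ :=
    exists_max_image (univ.filter (IsMatching G)) card ⟨∅, mem_filter.mpr ⟨mem_univ _, hempty⟩⟩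
  exact ⟨M, (mem_filter.mp hM).2, fun N hN => hmax N (mem_filter.mpr ⟨mem_univ _, hN⟩)⟩

lemma IsMaxMatching.isPerfectMatching [Fintype V] {M M' : Finset (Sym2 V)}
    (hM' : IsMaxMatching G M') (hM : IsPerfectMatching G M) : IsPerfectMatching G M' := by
  refine ⟨hM'.1, hM'.1.covers_all_iff_two_mul_card_eq.mpr ?_⟩
  have hcard := hM.1.covers_all_iff_two_mul_card_eq.mp hM.2
  have := hM'.2 M hM.1
  have := hM'.1.two_mul_card_le
  omega

namespace IsPerfectMatching

variable [Fintype V] {M M' : Finset (Sym2 V)}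

lemma subset_of_isAcyclic (hG : G.IsAcyclic) (hM : IsPerfectMatching G M)
    (hM' : IsPerfectMatching G M') : M ⊆ M' := by
  intro e he
  induction e with | h a b => ?_
  by_contra habM'
  have hab : G.Adj a b := hM.1.1 _ he
  set H := G.deleteEdges {s(a, b)}
  set A := univ.filter (H.Reachable a)
  have haA : a ∈ A := mem_filter.mpr ⟨mem_univ _, .refl a⟩
  have hbA : b ∉ A := fun hb =>
    SimpleGraph.isBridge_iff.mp (SimpleGraph.isAcyclic_iff_forall_adj_isBridge.mp hG hab)
      (mem_filter.mp hb).2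
  have hclosed : ∀ f ∈ G.edgeSet, f ≠ s(a, b) → ∀ v ∈ f, v ∈ A → ∀ w ∈ f, w ∈ A := by
    intro f hf hfab v hvf hvA w hwf
    have hfH : f ∈ H.edgeSet := by simp [H, SimpleGraph.edgeSet_deleteEdges, hf, hfab]
    exact mem_filter.mpr ⟨mem_univ _,
      (mem_filter.mp hvA).2.trans (SimpleGraph.reachable_of_mem_edgeSet hfH hvf hwf)⟩
  have hA_even : Even #A := hM'.1.even_card_of_forall_matched_within fun v hvA => by
    obtain ⟨f, hfM', hvf⟩ := hM'.2 v
    have hfab : f ≠ s(a, b) := by rintro rfl; exact habM' hfM'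
    exact ⟨f, hfM', hvf, hclosed f (hM'.1.1 f hfM') hfab v hvf hvA⟩
  have hAa_even : Even #(A.erase a) := hM.1.even_card_of_forall_matched_within fun v hv => by
    obtain ⟨hva, hvA⟩ := mem_erase.mp hv
    obtain ⟨f, hfM, hvf⟩ := hM.2 v
    have hfab : f ≠ s(a, b) := by
      rintro rfl
      rcases Sym2.mem_iff.mp hvf with rfl | rfl
      exacts [hva rfl, hbA hvA]
    have haf : a ∉ f := hM.1.2 _ he f hfM hfab.symm a (Sym2.mem_mk_left a b)
    refine ⟨f, hfM, hvf, fun w hwf => mem_erase.mpr ⟨?_, ?_⟩⟩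
    · rintro rfl
      exact haf hwf
    · exact hclosed f (hM.1.1 f hfM) hfab v hvf hvA w hwf
  rw [← card_erase_add_one haA, Nat.even_add_one] at hA_even
  exact hA_even hAa_even

lemma eq_of_isAcyclic (hG : G.IsAcyclic) (hM : IsPerfectMatching G M)
    (hM' : IsPerfectMatching G M') : M = M' :=
  (hM.subset_of_isAcyclic hG hM').antisymm (hM'.subset_of_isAcyclic hG hM)

end IsPerfectMatching

theorem tree_perfect_matching_iff_all_orange_general {V : Type} [Fintype V]
    (G : SimpleGraph V) (hT : G.IsTree) :
    (∃ M : Finset (Sym2 V), IsMatching G M ∧ ∀ v : V, Covers M v) ↔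
      ∀ v : V, IsOrangeVertex G v := by
  constructor
  · rintro ⟨M, hM⟩ v
    obtain ⟨e, he, hve⟩ := hM.2 v
    refine ⟨e, fun M' hM' => ⟨?_, hve⟩⟩
    rwa [← IsPerfectMatching.eq_of_isAcyclic hT.isAcyclic hM (hM'.isPerfectMatching hM)]
  · intro horange
    obtain ⟨M, hM⟩ := exists_isMaxMatching G
    refine ⟨M, hM.1, fun v => ?_⟩
    obtain ⟨e, he⟩ := horange v
    exact ⟨e, he M hM⟩

/-- A finite tree admits a perfect matching iff all its vertices are orange. -/
theorem tree_perfect_matching_iff_all_orange {V : Type} [Fintype V] [DecidableEq V]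
    (G : SimpleGraph V) (hT : G.IsTree) :
    (∃ M : Finset (Sym2 V), IsMatching G M ∧ ∀ v : V, Covers M v) ↔
      ∀ v : V, IsOrangeVertex G v :=
  tree_perfect_matching_iff_all_orange_general G hT
end

section
/- If a finite tree admits a perfect matching, then this perfect matching is unique. -/
open scoped symmDiff

namespace SimpleGraph

variable {V : Type*} {G H : SimpleGraph V}

theorem IsAcyclic.eq_bot_of_isCycles_of_le [Finite V] (hG : G.IsAcyclic) (hH : H.IsCycles)
    (hHG : H ≤ G) : H = ⊥ := by
  refine eq_bot_iff.2 fun v w hvw => ?_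
  have hbridge : G.IsBridge s(v, w) := isAcyclic_iff_forall_adj_isBridge.1 hG (hHG hvw)
  exact hbridge ((hH.reachable_deleteEdges hvw).mono (deleteEdges_mono hHG))

theorem Subgraph.IsPerfectMatching.eq_of_isAcyclic [Finite V] (hG : G.IsAcyclic)
    {M M' : G.Subgraph} (hM : M.IsPerfectMatching) (hM' : M'.IsPerfectMatching) : M = M' := by
  have hle : M.spanningCoe ∆ M'.spanningCoe ≤ G :=
    symmDiff_le_sup.trans (sup_le M.spanningCoe_le M'.spanningCoe_le)
  have hspan : M.spanningCoe = M'.spanningCoe :=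
    symmDiff_eq_bot.1 (hG.eq_bot_of_isCycles_of_le (hM.symmDiff_isCycles hM') hle)
  ext v w
  · simp [hM.2.verts_eq_univ, hM'.2.verts_eq_univ]
  · rw [← Subgraph.spanningCoe_adj, hspan, Subgraph.spanningCoe_adj]

end SimpleGraph

open SimpleGraph

section Matchings

variable {V : Type} {G : SimpleGraph V} {M : Finset (Sym2 V)}

theorem IsMatching.eq_of_mem_of_mem (hM : IsMatching G M) {e f : Sym2 V} (he : e ∈ M)
    (hf : f ∈ M) {v : V} (hve : v ∈ e) (hvf : v ∈ f) : e = f :=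
  by_contra fun hne => hM.2 e he f hf hne v hve hvf

theorem IsMatching.edgeSet_fromEdgeSet (hM : IsMatching G M) :
    (fromEdgeSet (M : Set (Sym2 V))).edgeSet = M := by
  rw [SimpleGraph.edgeSet_fromEdgeSet, sdiff_eq_left]
  exact Set.disjoint_left.2 fun e he => G.not_isDiag_of_mem_edgeSet (hM.1 e he)

def IsMatching.toSubgraph (hM : IsMatching G M) : G.Subgraph :=
  SimpleGraph.toSubgraph (fromEdgeSet M) ((fromEdgeSet_le G).2 fun e he => hM.1 e he.1)

theorem IsMatching.isPerfectMatching_toSubgraph (hM : IsMatching G M)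
    (hperf : ∀ v, Covers M v) : hM.toSubgraph.IsPerfectMatching := by
  refine Subgraph.isPerfectMatching_iff.2 fun v => ?_
  simp only [IsMatching.toSubgraph, SimpleGraph.toSubgraph_adj, fromEdgeSet_adj, Finset.mem_coe]
  obtain ⟨e, he, hve⟩ := hperf v
  obtain ⟨w, rfl⟩ := Sym2.mem_iff_exists.1 hve
  refine ⟨w, ⟨he, (G.mem_edgeSet.1 (hM.1 _ he)).ne⟩, fun w' hw' => ?_⟩
  exact Sym2.congr_right.1 <|
    hM.eq_of_mem_of_mem hw'.1 he (Sym2.mem_mk_left v w') (Sym2.mem_mk_left v w)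

theorem IsMatching.eq_of_toSubgraph_eq {M' : Finset (Sym2 V)} (hM : IsMatching G M)
    (hM' : IsMatching G M') (h : hM.toSubgraph = hM'.toSubgraph) : M = M' := by
  have hgraph : fromEdgeSet (M : Set (Sym2 V)) = fromEdgeSet M' := by
    ext v w
    exact iff_of_eq congr(Subgraph.Adj $h v w)
  exact Finset.coe_injective <| by
    rw [← hM.edgeSet_fromEdgeSet, hgraph, hM'.edgeSet_fromEdgeSet]

end Matchings

theorem tree_perfect_matching_unique_general {V : Type} [Fintype V]
    (G : SimpleGraph V) (hT : G.IsTree) (M M' : Finset (Sym2 V))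
    (hM : IsMatching G M) (hMperf : ∀ v : V, Covers M v)
    (hM' : IsMatching G M') (hM'perf : ∀ v : V, Covers M' v) :
    M = M' :=
  hM.eq_of_toSubgraph_eq hM' <| (hM.isPerfectMatching_toSubgraph hMperf).eq_of_isAcyclic
    hT.isAcyclic (hM'.isPerfectMatching_toSubgraph hM'perf)

/-- A finite tree admits at most one perfect matching. -/
theorem tree_perfect_matching_unique {V : Type} [Fintype V] [DecidableEq V]
    (G : SimpleGraph V) (hT : G.IsTree) (M M' : Finset (Sym2 V))
    (hM : IsMatching G M) (hMperf : ∀ v : V, Covers M v)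
    (hM' : IsMatching G M') (hM'perf : ∀ v : V, Covers M' v) :
    M = M' :=
  tree_perfect_matching_unique_general G hT M M' hM hMperf hM' hM'perf
end

section
/- The polynomial N_{A_n}(q) = (q^{n+2} - 1)/(q^2 - 1) counts, for even n, the number of solutions over the finite field F_q of the system x_1 x_1' = 1 + x_2, x_i x_i' = 1 + x_{i-1} x_{i+1} for 2 ≤ i ≤ n-1, and x_n x_n' = 1 + x_{n-1}, in variables x_1,...,x_n, x_1',...,x_n' ∈ F_q. -/
/-!
Let `T_n(p)` count the points of the system in which the first equation is replaced by
`x₁ x₁' = 1 + p x₂`. If `x₁ = a ≠ 0`, then `x₁'` is determined and the rest is the system of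
length `n - 1` with parameter `a`. If `x₁ = 0`, then `p x₂ = -1`, so `x₂ = -p⁻¹`, `x₁'` is free
and `x₂' = x₂⁻¹`, which leaves the system of length `n - 2` with parameter `-p⁻¹`. Hence, for
`p ≠ 0`,
  `T_{n+2}(p) = ∑_{a ≠ 0} T_{n+1}(a) + q T_n(-p⁻¹)`,
and induction on `k` gives, for `p ≠ 0`,
  `(q² - 1) T_{2k}(p) = q^{2k+2} - 1`,
  `(q² - 1) T_{2k+1}(p) = (q^{k+1} - 1)(q^{k+2} - 1) + [p = (-1)^{k+1}] q^{k+1} (q² - 1)`.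
The theorem is the even case at `p = 1`.
-/

open scoped Classical

open Finset

section SolutionCount

variable {F : Type} [Field F]

noncomputable def solCount (a c : F) : ℕ := Nat.card {z : F // a * z = c}

theorem solCount_of_ne_zero {a : F} (ha : a ≠ 0) (c : F) : solCount a c = 1 := by
  rw [solCount, Nat.card_eq_one_iff_exists]
  refine ⟨⟨a⁻¹ * c, by field_simp⟩, fun ⟨z, hz⟩ => Subtype.ext ?_⟩
  simp only [← hz]
  field_simp

variable [Fintype F]

theorem solCount_zero_left (c : F) :
    solCount 0 c = if c = 0 then Fintype.card F else 0 := by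
  split_ifs with hc
  · simp [solCount, hc, Nat.card_eq_fintype_card]
  · simp [solCount, Ne.symm hc]

theorem card_solutions_eq_sum {ι : Type*} [Fintype ι] [DecidableEq ι] (B : (ι → F) → ι → F) :
    Nat.card {p : (ι → F) × (ι → F) // ∀ i, p.1 i * p.2 i = B p.1 i} =
      ∑ x : ι → F, ∏ i, solCount (x i) (B x i) := by
  rw [Nat.card_congr (Equiv.subtypeProdEquivSigmaSubtype
    fun (x y : ι → F) => ∀ i, x i * y i = B x i), Nat.card_sigma]
  refine Fintype.sum_congr _ _ fun x => ?_
  rw [Nat.card_congr (Equiv.subtypePiEquivPi (p := fun i z => x i * z = B x i)), Nat.card_pi]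
  rfl

theorem sum_eq_add_sum_units {M : Type*} [AddCommMonoid M] (f : F → M) :
    ∑ a, f a = f 0 + ∑ u : Fˣ, f u := by
  rw [Fintype.sum_eq_add_sum_subtype_ne f 0, ← unitsEquivNeZero.sum_comp]
  rfl

end SolutionCount

section PathGraph

variable {M : Type*} [CommMonoid M] {n : ℕ}

theorem prod_filter_val_add_one_eq (x : Fin n → M) (i : Fin n) :
    ∏ j ∈ univ.filter (fun j : Fin n => j.val + 1 = i.val), x j =
      (Fin.cons 1 (Fin.snoc x 1 : Fin (n + 1) → M) : Fin (n + 2) → M) i.castSucc.castSucc := by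
  cases n with
  | zero => exact i.elim0
  | succ n =>
  induction i using Fin.cases with
  | zero => simp
  | succ k =>
    rw [show univ.filter (fun j : Fin (n + 1) => j.val + 1 = k.succ.val) = {k.castSucc} by
      ext j; simp [Fin.ext_iff]]
    simp

theorem prod_filter_eq_val_add_one (x : Fin n → M) (i : Fin n) :
    ∏ j ∈ univ.filter (fun j : Fin n => i.val + 1 = j.val), x j =
      (Fin.cons 1 (Fin.snoc x 1 : Fin (n + 1) → M) : Fin (n + 2) → M) i.succ.succ := by
  cases n with
  | zero => exact i.elim0
  | succ n =>
  induction i using Fin.lastCases with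
  | last =>
    rw [show univ.filter (fun j : Fin (n + 1) => (Fin.last n).val + 1 = j.val) = ∅ by
      ext j; simp; omega]
    simp
  | cast k =>
    rw [show univ.filter (fun j : Fin (n + 1) => k.castSucc.val + 1 = j.val) = {k.succ} by
      ext j; simp [Fin.ext_iff]; omega]
    rw [prod_singleton, Fin.cons_succ, Fin.succ_castSucc, Fin.snoc_castSucc]

theorem prod_pathGraph_adj (x : Fin n → M) (i : Fin n) :
    ∏ j ∈ univ.filter (fun j => (SimpleGraph.pathGraph n).Adj i j), x j =
      (Fin.cons 1 (Fin.snoc x 1 : Fin (n + 1) → M) : Fin (n + 2) → M) i.castSucc.castSucc *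
        (Fin.cons 1 (Fin.snoc x 1 : Fin (n + 1) → M) : Fin (n + 2) → M) i.succ.succ := by
  simp_rw [SimpleGraph.pathGraph_adj, filter_or]
  rw [prod_union (disjoint_filter.2 fun j _ h₁ h₂ => by omega), prod_filter_val_add_one_eq,
    prod_filter_eq_val_add_one, mul_comm]

end PathGraph

section PathCount

variable {F : Type} [Field F]

/-- `e` lists the values along the path between two boundary values `e 0` and `e (Fin.last _)`,
which play the role of the missing neighbours of the end vertices. -/
noncomputable def pathWeight {n : ℕ} (e : Fin (n + 2) → F) : ℕ :=
  ∏ i : Fin n, solCount (e i.castSucc.succ) (1 + e i.castSucc.castSucc * e i.succ.succ)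

theorem pathWeight_cons {n : ℕ} (u : F) (e : Fin (n + 2) → F) :
    pathWeight (Fin.cons u e : Fin (n + 3) → F) =
      solCount (e 0) (1 + u * e 1) * pathWeight e := by
  rw [pathWeight, Fin.prod_univ_succ]
  rfl

variable [Fintype F]

/-- The count `T_n(p)` of the header: the boundary values are `p` on the left and `1` on the
right. -/
noncomputable def pathCount (n : ℕ) (p : F) : ℕ :=
  ∑ x : Fin n → F, pathWeight (Fin.cons p (Fin.snoc x 1 : Fin (n + 1) → F))

theorem pathCount_zero (p : F) : pathCount 0 p = 1 := by
  simp [pathCount, pathWeight]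

theorem pathCount_succ (n : ℕ) (p : F) :
    pathCount (n + 1) p = ∑ u : Fˣ, pathCount n (u : F) +
      ∑ y : Fin n → F, solCount 0 (1 + p * (Fin.snoc y 1 : Fin (n + 1) → F) 0) *
        pathWeight (Fin.cons 0 (Fin.snoc y 1 : Fin (n + 1) → F)) := by
  rw [pathCount, ← (Fin.consEquiv _).sum_comp, Fintype.sum_prod_type, sum_eq_add_sum_units,
    add_comm]
  congr 1
  · refine Fintype.sum_congr _ _ fun u => Fintype.sum_congr _ _ fun y => ?_
    simp [Fin.consEquiv, ← Fin.cons_snoc_eq_snoc_cons, pathWeight_cons,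
      solCount_of_ne_zero u.ne_zero]
  · refine Fintype.sum_congr _ _ fun y => ?_
    simp [Fin.consEquiv, ← Fin.cons_snoc_eq_snoc_cons, pathWeight_cons]

theorem pathCount_one (p : F) :
    pathCount 1 p = Fintype.card Fˣ + if p = -1 then Fintype.card F else 0 := by
  have h : (Fin.snoc (default : Fin 0 → F) 1 : Fin 1 → F) 0 = 1 := Fin.snoc_last (n := 0) _ _
  simp [pathCount_succ, pathCount_zero, pathWeight, solCount_zero_left,
    add_eq_zero_iff_eq_neg', h]

theorem pathCount_add_two (n : ℕ) (p : Fˣ) :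
    pathCount (n + 2) (p : F) = ∑ u : Fˣ, pathCount (n + 1) (u : F) +
      Fintype.card F * pathCount n (-(p : F)⁻¹) := by
  rw [pathCount_succ]
  congr 1
  rw [← (Fin.consEquiv _).sum_comp, Fintype.sum_prod_type]
  have hroot (b : F) : 1 + p * b = 0 ↔ b = -(p : F)⁻¹ := by
    rw [eq_neg_iff_add_eq_zero, ← mul_eq_zero_iff_left p.ne_zero (b := b + _), mul_add,
      mul_inv_cancel₀ p.ne_zero, add_comm]
  rw [Fintype.sum_eq_single (-(p : F)⁻¹)]
  · simp [Fin.consEquiv, ← Fin.cons_snoc_eq_snoc_cons, pathWeight_cons, solCount_zero_left,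
      solCount_of_ne_zero, pathCount, mul_sum]
  · intro b hb
    simp [Fin.consEquiv, ← Fin.cons_snoc_eq_snoc_cons, pathWeight_cons, solCount_zero_left,
      hroot, hb]

theorem card_pathGraph_solutions_eq_pathCount (n : ℕ) :
    Nat.card {p : (Fin n → F) × (Fin n → F) //
        ∀ i : Fin n, p.1 i * p.2 i =
          1 + ∏ j ∈ univ.filter (fun j => (SimpleGraph.pathGraph n).Adj i j), p.1 j} =
      pathCount n (1 : F) := by
  refine (card_solutions_eq_sum fun x i =>
    1 + ∏ j ∈ univ.filter (fun j => (SimpleGraph.pathGraph n).Adj i j), x j).trans ?_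
  unfold pathCount pathWeight
  refine sum_congr rfl fun x _ => prod_congr rfl fun i _ => ?_
  rw [prod_pathGraph_adj]
  simp

end PathCount

theorem neg_inv_eq_neg_one_pow_iff {G : Type*} [Group G] [HasDistribNeg G] (p : G) (k : ℕ) :
    -p⁻¹ = (-1) ^ k ↔ p = (-1) ^ (k + 1) := by
  rw [neg_eq_iff_eq_neg, inv_eq_iff_eq_inv, pow_succ, mul_neg_one, inv_neg, ← inv_pow,
    inv_neg_one]

section ClosedForm

variable {F : Type} [Field F] [Fintype F]

local notation "q" => (Fintype.card F : ℤ)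

theorem cast_card_units : (Fintype.card Fˣ : ℤ) = q - 1 := by
  rw [Fintype.card_eq_card_units_add_one (α := F)]
  push_cast
  ring

theorem sum_units_add_ite (ε : Fˣ) (A B : ℤ) :
    ∑ u : Fˣ, (A + if u = ε then B else 0) = (q - 1) * A + B := by
  rw [sum_add_distrib, sum_ite_eq', if_pos (mem_univ _), sum_const, card_univ, nsmul_eq_mul,
    cast_card_units]

theorem pathCount_mul_card_sq_sub_one (k : ℕ) :
    (∀ p : Fˣ, (pathCount (2 * k) (p : F) : ℤ) * (q ^ 2 - 1) = q ^ (2 * k + 2) - 1) ∧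
    ∀ p : Fˣ, (pathCount (2 * k + 1) (p : F) : ℤ) * (q ^ 2 - 1) =
      (q ^ (k + 1) - 1) * (q ^ (k + 2) - 1) +
        if p = (-1) ^ (k + 1) then q ^ (k + 1) * (q ^ 2 - 1) else 0 := by
  induction k with
  | zero =>
    refine ⟨fun p => by simp [pathCount_zero], fun p => ?_⟩
    rw [pathCount_one]
    push_cast
    rw [cast_card_units]
    by_cases h : p = -1
    · simp [h]
      ring
    · simp [h]
  | succ k ih =>
    obtain ⟨hEven, hOdd⟩ := ih
    have hEven' (p : Fˣ) :
        (pathCount (2 * (k + 1)) (p : F) : ℤ) * (q ^ 2 - 1) = q ^ (2 * (k + 1) + 2) - 1 := by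
      rw [show 2 * (k + 1) = 2 * k + 2 by ring, pathCount_add_two]
      push_cast
      rw [add_mul, sum_mul, Fintype.sum_congr _ _ hOdd, sum_units_add_ite, mul_assoc]
      have h := hEven (-p⁻¹)
      push_cast at h
      rw [h]
      ring
    refine ⟨hEven', fun p => ?_⟩
    rw [show 2 * (k + 1) + 1 = 2 * k + 1 + 2 by ring, pathCount_add_two,
      show 2 * k + 1 + 1 = 2 * (k + 1) by ring]
    push_cast
    rw [add_mul, sum_mul, Fintype.sum_congr _ _ hEven', sum_const, card_univ, nsmul_eq_mul,
      cast_card_units, mul_assoc]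
    have h := hOdd (-p⁻¹)
    push_cast at h
    rw [h]
    simp only [neg_inv_eq_neg_one_pow_iff]
    split_ifs <;> ring

end ClosedForm

theorem card_typeA_even_general (F : Type) [Field F] [Fintype F] (n : ℕ)
    (he : Even n) :
    Nat.card {p : (Fin n → F) × (Fin n → F) //
        ∀ i : Fin n, p.1 i * p.2 i =
          1 + ∏ j ∈ Finset.univ.filter (fun j => (SimpleGraph.pathGraph n).Adj i j), p.1 j}
      * (Fintype.card F ^ 2 - 1)
      = Fintype.card F ^ (n + 2) - 1 := by
  obtain ⟨k, rfl⟩ := he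
  rw [card_pathGraph_solutions_eq_pathCount, ← two_mul]
  have hq : 1 ≤ Fintype.card F := Fintype.card_pos
  zify [Nat.one_le_pow 2 _ hq, Nat.one_le_pow (2 * k + 2) _ hq]
  simpa using (pathCount_mul_card_sq_sub_one (F := F) k).1 1

/-- For even `n`, the number of `F_q`-points of the cluster variety of type
`A_n` (equations `x_i x_i' = 1 + ∏_{j ~ i} x_j` over the path graph) is
`(q^{n+2} - 1)/(q^2 - 1)`. -/
theorem card_typeA_even (F : Type) [Field F] [Fintype F] (n : ℕ)
    (hn : 0 < n) (he : Even n) :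
    Nat.card {p : (Fin n → F) × (Fin n → F) //
        ∀ i : Fin n, p.1 i * p.2 i =
          1 + ∏ j ∈ Finset.univ.filter (fun j => (SimpleGraph.pathGraph n).Adj i j), p.1 j}
      * (Fintype.card F ^ 2 - 1)
      = Fintype.card F ^ (n + 2) - 1 :=
  card_typeA_even_general F n he
end

section
/- For odd n, the number of F_q-points of the versal variety of type A_n (equations x_i x_i' = 1 + α·[i=1]·∏_{j~i} x_j with invertible parameter α attached to vertex 1) equals (q^{n+2} + 1)/(q + 1). -/
/-!
Put `x₀ = α` and `xₙ₊₁ = 1`, so that every equation reads `xᵢ xᵢ' = 1 + xᵢ₋₁ xᵢ₊₁`. Let `N_n(a)`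
count the solutions with `x₀ = a`, and `A_n = ∑_{a ≠ 0} N_n(a)`. Split by `x₁`: if `x₁ ≠ 0` then
`x₁'` is determined and the rest is a solution of length `n - 1` with `x₀ = x₁`; if `x₁ = 0` then
`1 + a x₂ = 0` forces `x₂ = -a⁻¹` and `x₂' = -a`, leaves `x₁'` free, and the rest is a solution of
length `n - 2` with `x₀ = -a⁻¹`. As `a ↦ -a⁻¹` permutes `Fˣ`, this gives
`A_{n+2} = (q - 1) A_{n+1} + q A_n` with `A_0 = q - 1`, `A_1 = (q - 1)² + q`, whence
`(q + 1) A_n = q^{n+2} - (-1)^n`.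
-/

open scoped Classical

open Finset SimpleGraph

namespace VersalTypeA

section PathGraph

variable {M : Type*} [CommMonoid M]

lemma prod_pathGraph_adj_zero {n : ℕ} (s : M) (y : Fin n → M) :
    ∏ j ∈ univ.filter (fun j => (pathGraph (n + 1)).Adj 0 j), (Fin.cons s y : Fin (n + 1) → M) j
      = (List.ofFn y).headD 1 := by
  cases n with
  | zero => simp [pathGraph_adj]
  | succ n =>
    rw [prod_filter, Fin.prod_univ_succ, Fin.prod_univ_succ]
    simp [pathGraph_adj]

lemma prod_pathGraph_adj_succ {n : ℕ} (s : M) (y : Fin n → M) (i : Fin n) :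
    ∏ j ∈ univ.filter (fun j => (pathGraph (n + 1)).Adj i.succ j),
        (Fin.cons s y : Fin (n + 1) → M) j
      = (if i.val = 0 then s else 1) *
          ∏ j ∈ univ.filter (fun j => (pathGraph n).Adj i j), y j := by
  rw [prod_filter, prod_filter, Fin.prod_univ_succ]
  simp [pathGraph_adj, eq_comm]

end PathGraph

lemma sum_ofFn_succ {α M : Type*} [Fintype α] [AddCommMonoid M] {n : ℕ} (g : List α → M) :
    ∑ x : Fin (n + 1) → α, g (List.ofFn x) = ∑ s : α, ∑ y : Fin n → α, g (s :: List.ofFn y) := by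
  rw [← (Fin.consEquiv fun _ => α).sum_comp, Fintype.sum_prod_type]
  simp [List.ofFn_succ]

lemma sum_eq_add_sum_units {G M : Type*} [GroupWithZero G] [Fintype G] [AddCommMonoid M]
    (f : G → M) :
    ∑ s, f s = f 0 + ∑ u : Gˣ, f u := by
  rw [Fintype.sum_eq_add_sum_subtype_ne f 0, ← unitsEquivNeZero.sum_comp]
  rfl

variable {F : Type*} [Field F]

noncomputable def mulFiberCard (s r : F) : ℕ := Nat.card {z : F // s * z = r}

lemma mulFiberCard_of_ne_zero {s : F} (hs : s ≠ 0) (r : F) : mulFiberCard s r = 1 :=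
  Nat.card_eq_one_iff_exists.2
    ⟨⟨s⁻¹ * r, by field_simp⟩, fun ⟨z, hz⟩ => Subtype.ext (by subst hz; field_simp)⟩

lemma card_pi_mul_eq {ι : Type*} [Fintype ι] (c r : ι → F) :
    Nat.card {y : ι → F // ∀ i, c i * y i = r i} = ∏ i, mulFiberCard (c i) (r i) := by
  rw [Nat.card_congr (Equiv.subtypePiEquivPi (p := fun i z => c i * z = r i)), Nat.card_pi]
  rfl

/-- `pathWeight a [x₁, …, xₙ]` is the number of `x'` with `xᵢ xᵢ' = 1 + xᵢ₋₁ xᵢ₊₁`, where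
`x₀ = a` and `xₙ₊₁ = 1`. -/
noncomputable def pathWeight : F → List F → ℕ
  | _, [] => 1
  | a, s :: t => mulFiberCard s (1 + a * t.headD 1) * pathWeight s t

lemma prod_mulFiberCard_eq_pathWeight {n : ℕ} (a : F) (x : Fin n → F) :
    ∏ i, mulFiberCard (x i) (1 + (if i.val = 0 then a else 1) *
        ∏ j ∈ univ.filter (fun j => (pathGraph n).Adj i j), x j)
      = pathWeight a (List.ofFn x) := by
  induction n generalizing a with
  | zero => simp [pathWeight]
  | succ n ih =>
    induction x using Fin.consCases with
    | cons s y =>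
      simp only [Fin.prod_univ_succ, prod_pathGraph_adj_zero, prod_pathGraph_adj_succ,
        List.ofFn_succ, Fin.cons_zero, Fin.cons_succ, Fin.val_zero, Fin.val_succ]
      simp [pathWeight, ← ih]

variable [Fintype F]

lemma mulFiberCard_zero_left (r : F) :
    mulFiberCard 0 r = if r = 0 then Fintype.card F else 0 := by
  split_ifs with hr
  · simp [mulFiberCard, hr, Nat.card_eq_fintype_card]
  · simp [mulFiberCard, Ne.symm hr]

noncomputable def pathCount (n : ℕ) (a : F) : ℕ := ∑ x : Fin n → F, pathWeight a (List.ofFn x)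

lemma pathCount_succ (n : ℕ) (a : F) :
    pathCount (n + 1) a = ∑ y : Fin n → F, pathWeight a (0 :: List.ofFn y)
      + ∑ u : Fˣ, pathCount n (u : F) := by
  rw [pathCount, sum_ofFn_succ, sum_eq_add_sum_units]
  congr 1
  refine Fintype.sum_congr _ _ fun u => Fintype.sum_congr _ _ fun y => ?_
  rw [pathWeight, mulFiberCard_of_ne_zero u.ne_zero, one_mul]

lemma pathCount_one (a : F) :
    pathCount 1 a = (if 1 + a = 0 then Fintype.card F else 0) + Fintype.card Fˣ := by
  rw [pathCount_succ]
  simp [pathCount, pathWeight, mulFiberCard_zero_left]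

lemma pathCount_add_two {a : F} (ha : a ≠ 0) (n : ℕ) :
    pathCount (n + 2) a
      = Fintype.card F * pathCount n (-a⁻¹) + ∑ u : Fˣ, pathCount (n + 1) (u : F) := by
  rw [pathCount_succ, sum_ofFn_succ (fun t => pathWeight a (0 :: t)),
    Fintype.sum_eq_single (-a⁻¹)]
  · simp [pathWeight, mulFiberCard_zero_left, mulFiberCard_of_ne_zero, ha, pathCount, mul_sum]
  · intro u hu
    have hau : 1 + a * u ≠ 0 := fun h => hu (by field_simp; linear_combination h)
    simp [pathWeight, mulFiberCard_zero_left, hau]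

lemma sum_units_neg_inv {M : Type*} [AddCommMonoid M] (f : F → M) :
    ∑ u : Fˣ, f (-(u : F)⁻¹) = ∑ u : Fˣ, f u := by
  rw [← ((Equiv.inv Fˣ).trans (Equiv.neg Fˣ)).sum_comp]
  simp

variable (F)

noncomputable def versalCount (n : ℕ) : ℕ := ∑ a : Fˣ, pathCount n (a : F)

lemma versalCount_zero : versalCount F 0 = Fintype.card Fˣ := by
  simp [versalCount, pathCount, pathWeight]

lemma versalCount_one :
    versalCount F 1 = Fintype.card F + Fintype.card Fˣ * Fintype.card Fˣ := by
  have h : ∀ u : Fˣ, 1 + (u : F) = 0 ↔ u = -1 := fun u => by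
    rw [← Units.val_inj, Units.val_neg, Units.val_one, eq_neg_iff_add_eq_zero, add_comm]
  simp [versalCount, pathCount_one, sum_add_distrib, h]

lemma versalCount_add_two (n : ℕ) :
    versalCount F (n + 2)
      = Fintype.card F * versalCount F n + Fintype.card Fˣ * versalCount F (n + 1) := by
  simp [versalCount, pathCount_add_two, sum_add_distrib, ← mul_sum, sum_units_neg_inv]

lemma card_add_one_mul_versalCount : ∀ n : ℕ,
    ((Fintype.card F : ℤ) + 1) * versalCount F n = (Fintype.card F : ℤ) ^ (n + 2) - (-1) ^ n
  | 0 => by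
    rw [versalCount_zero, Fintype.card_eq_card_units_add_one (α := F)]
    push_cast
    ring
  | 1 => by
    rw [versalCount_one, Fintype.card_eq_card_units_add_one (α := F)]
    push_cast
    ring
  | n + 2 => by
    have hq : (Fintype.card F : ℤ) = Fintype.card Fˣ + 1 := by
      exact_mod_cast Fintype.card_eq_card_units_add_one (α := F)
    have h₀ := card_add_one_mul_versalCount n
    have h₁ := card_add_one_mul_versalCount (n + 1)
    rw [versalCount_add_two]
    push_cast
    linear_combination (Fintype.card F : ℤ) * h₀ + (Fintype.card Fˣ : ℤ) * h₁
      - ((Fintype.card F : ℤ) ^ (n + 3) + (-1) ^ n) * hq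

lemma card_versal_eq_versalCount (n : ℕ) :
    Nat.card {p : (Fin n → F) × (Fin n → F) × F //
        p.2.2 ≠ 0 ∧ ∀ i : Fin n, p.1 i * p.2.1 i =
          1 + (if i.val = 0 then p.2.2 else 1) *
            ∏ j ∈ univ.filter (fun j => (pathGraph n).Adj i j), p.1 j}
      = versalCount F n := by
  rw [Nat.card_congr (β := Σ (a : Fˣ) (x : Fin n → F), {x' : Fin n → F // ∀ i : Fin n,
      x i * x' i = 1 + (if i.val = 0 then (a : F) else 1) *
        ∏ j ∈ univ.filter (fun j => (pathGraph n).Adj i j), x j})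
    { toFun := fun p => ⟨Units.mk0 _ p.2.1, p.1.1, p.1.2.1, p.2.2⟩
      invFun := fun w => ⟨(w.2.1, w.2.2.1, w.1), w.1.ne_zero, w.2.2.2⟩
      left_inv := fun _ => rfl
      right_inv := fun w => Sigma.ext (Units.mk0_val _ w.1.ne_zero) HEq.rfl }]
  rw [Nat.card_sigma]
  refine Fintype.sum_congr _ _ fun a => ?_
  rw [Nat.card_sigma, pathCount]
  refine Fintype.sum_congr _ _ fun x => ?_
  rw [card_pi_mul_eq, prod_mulFiberCard_eq_pathWeight]

end VersalTypeA

/-- For odd `n`, the number of `F_q`-points of the versal variety of type `A_n`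
(equations `x_i x_i' = 1 + α^{[i=1]} ∏_{j ~ i} x_j` over the path graph, with
an invertible parameter `α` attached to the first vertex) is
`(q^{n+2} + 1)/(q + 1)`. -/
theorem card_typeA_odd_versal (F : Type) [Field F] [Fintype F] (n : ℕ)
    (hn : Odd n) :
    Nat.card {p : (Fin n → F) × (Fin n → F) × F //
        p.2.2 ≠ 0 ∧ ∀ i : Fin n, p.1 i * p.2.1 i =
          1 + (if i.val = 0 then p.2.2 else 1) *
            ∏ j ∈ Finset.univ.filter (fun j => (SimpleGraph.pathGraph n).Adj i j), p.1 j}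
      * (Fintype.card F + 1)
      = Fintype.card F ^ (n + 2) + 1 := by
  have h := VersalTypeA.card_add_one_mul_versalCount F n
  rw [hn.neg_one_pow, sub_neg_eq_add, mul_comm] at h
  rw [VersalTypeA.card_versal_eq_versalCount]
  exact_mod_cast h
end

section
/- For odd n and a generic fixed parameter α ∈ F_q with α ≠ 0 and α ≠ (-1)^{(n+1)/2}, the number of F_q-points of the variety with equations x_1 x_1' = 1 + α x_2, x_i x_i' = 1 + x_{i-1}x_{i+1} (1 < i < n), x_n x_n' = 1 + x_{n-1} equals (q^{(n+1)/2} - 1)(q^{(n+3)/2} - 1)/(q^2 - 1). -/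
/-!
Let `N_k(β)` count the points of the type `A_k` system whose first equation is
`x₁ x₁' = 1 + β x₂`, and fibre them over the value `t` of `x₁`. If `t ≠ 0`, then `x₁'` is
determined and the remaining equations form the type `A_{k-1}` system with first coefficient `t`.
If `t = 0`, the first equation forces `x₂ = -β⁻¹`, hence `x₂' = -β`, while `x₁'` is free and the
remaining equations form the type `A_{k-2}` system with first coefficient `-β⁻¹`. Hence
`N_{k+2}(β) = q N_k(-β⁻¹) + ∑_{t ≠ 0} N_{k+1}(t)`, with `N_0 = 1`, `N_1(β) = q - 1 + q [β = -1]`.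
A joint induction over even and odd `k` gives `(q² - 1) N_{2m} = q^{2m+2} - 1` and
`(q² - 1) N_{2m+1}(β) = (q^{m+1} - 1)(q^{m+2} - 1) + [β = (-1)^{m+1}] (q² - 1) q^{m+1}`;
the exceptional value propagates because `-β⁻¹ = (-1)^{m+1} ↔ β = (-1)^{m+2}`.
-/

open scoped Classical

lemma Nat.card_subtype_eq_sum_card_fiber {α β : Type*} [Finite α] [Fintype β]
    (P : α → Prop) (f : α → β) :
    Nat.card {a // P a} = ∑ b, Nat.card {a // P a ∧ f a = b} := by
  have := Fintype.ofFinite α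
  simp only [Nat.card_eq_fintype_card, Fintype.card_subtype]
  rw [Finset.card_eq_sum_card_fiberwise (f := f) (t := Finset.univ)
    fun _ _ => Finset.mem_univ _]
  simp only [Finset.filter_filter]

lemma neg_inv_eq_neg_one_pow_iff_s12 {K : Type*} [DivisionRing K] (a : K) (n : ℕ) :
    -a⁻¹ = (-1) ^ n ↔ a = (-1) ^ (n + 1) := by
  rw [neg_eq_iff_eq_neg, ← mul_neg_one, ← pow_succ, inv_eq_iff_eq_inv, ← inv_pow, inv_neg_one]

namespace SimpleGraph

variable {V M : Type*} [CommMonoid M]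

noncomputable def neighborProd [Fintype V] (G : SimpleGraph V) (x : V → M) (i : V) : M :=
  ∏ j ∈ Finset.univ.filter (fun j => G.Adj i j), x j

lemma neighborProd_pathGraph_succ {k : ℕ} (x : Fin (k + 1) → M) (i : Fin k) :
    (pathGraph (k + 1)).neighborProd x i.succ
      = (if i.val = 0 then x 0 else 1) * (pathGraph k).neighborProd (Fin.tail x) i := by
  simp only [neighborProd, Finset.prod_filter, Fin.prod_univ_succ, pathGraph_adj, Fin.val_succ,
    Fin.val_zero, Fin.tail, add_left_inj]
  congr 1
  exact if_congr (by omega) rfl rfl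

lemma neighborProd_pathGraph_zero {k : ℕ} (x : Fin (k + 2) → M) :
    (pathGraph (k + 2)).neighborProd x 0 = x 1 := by
  rw [neighborProd, Finset.prod_eq_single_of_mem 1 (by simp [pathGraph_adj])]
  intro j hj hj1
  simp only [Finset.mem_filter, Finset.mem_univ, true_and, pathGraph_adj, Fin.val_zero] at hj
  exact absurd (Fin.ext (by simp; omega)) hj1

lemma neighborProd_pathGraph_one (x : Fin 1 → M) (i : Fin 1) :
    (pathGraph 1).neighborProd x i = 1 := by
  simp [neighborProd, pathGraph_adj]

end SimpleGraph

namespace TypeA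

open SimpleGraph

variable {F : Type*} [Field F]

/-- The type `A_k` system whose first equation carries the coefficient `β`, with `p = (x, x')`
and indices shifted to start at `0`. -/
def IsPoint (k : ℕ) (β : F) (p : (Fin k → F) × (Fin k → F)) : Prop :=
  ∀ i : Fin k, p.1 i * p.2 i =
    1 + (if i.val = 0 then β else 1) * (pathGraph k).neighborProd p.1 i

lemma isPoint_succ_iff {k : ℕ} {β : F} {x y : Fin (k + 1) → F} :
    IsPoint (k + 1) β (x, y) ↔
      x 0 * y 0 = 1 + β * (pathGraph (k + 1)).neighborProd x 0 ∧
        IsPoint k (x 0) (Fin.tail x, Fin.tail y) := by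
  simp only [IsPoint, Fin.forall_fin_succ, Fin.val_zero, if_true, Fin.val_succ,
    Nat.add_one_ne_zero, if_false, one_mul, neighborProd_pathGraph_succ]
  rfl

lemma isPoint_succ_iff_of_ne_zero {k : ℕ} {β t : F} (ht : t ≠ 0) {x y : Fin (k + 1) → F}
    (hx : x 0 = t) :
    IsPoint (k + 1) β (x, y) ↔
      y 0 = t⁻¹ * (1 + β * (pathGraph (k + 1)).neighborProd x 0) ∧
        IsPoint k t (Fin.tail x, Fin.tail y) := by
  rw [isPoint_succ_iff, hx, ← eq_inv_mul_iff_mul_eq₀ ht]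

lemma isPoint_add_two_iff_of_eq_zero {k : ℕ} {β : F} (hβ : β ≠ 0) {x y : Fin (k + 2) → F}
    (hx : x 0 = 0) :
    IsPoint (k + 2) β (x, y) ↔
      x 1 = -β⁻¹ ∧ y 1 = -β ∧
        IsPoint k (-β⁻¹) (Fin.tail (Fin.tail x), Fin.tail (Fin.tail y)) := by
  rw [isPoint_succ_iff, isPoint_succ_iff, hx, neighborProd_pathGraph_zero]
  simp only [Fin.tail, Fin.succ_zero_eq_one, zero_mul]
  constructor
  · rintro ⟨h₀, h₁, h⟩
    have hx₁ : x 1 = -β⁻¹ := by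
      field_simp
      linear_combination -h₀
    rw [hx₁] at h₁ h
    refine ⟨hx₁, ?_, h⟩
    field_simp at h₁
    linear_combination -h₁
  · rintro ⟨hx₁, hy₁, h⟩
    rw [hx₁, hy₁]
    exact ⟨by field_simp; ring, by field_simp; ring, h⟩

noncomputable def numPoints (k : ℕ) (β : F) : ℕ :=
  Nat.card {p : (Fin k → F) × (Fin k → F) // IsPoint k β p}

lemma numPoints_zero (β : F) : numPoints 0 β = 1 := by
  have : Unique {p : (Fin 0 → F) × (Fin 0 → F) // IsPoint 0 β p} :=
    { default := ⟨(Fin.elim0, Fin.elim0), fun i => i.elim0⟩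
      uniq := fun _ => Subsingleton.elim _ _ }
  exact Nat.card_unique

lemma card_fiber_of_ne_zero (k : ℕ) (β : F) {t : F} (ht : t ≠ 0) :
    Nat.card {p : (Fin (k + 1) → F) × (Fin (k + 1) → F) // IsPoint (k + 1) β p ∧ p.1 0 = t}
      = numPoints k t := by
  refine Nat.card_congr
    { toFun := fun p => ⟨(Fin.tail p.1.1, Fin.tail p.1.2),
        ((isPoint_succ_iff_of_ne_zero ht p.2.2).1 p.2.1).2⟩
      invFun := fun p =>
        ⟨(Fin.cons t p.1.1,
            Fin.cons (t⁻¹ * (1 + β * (pathGraph (k + 1)).neighborProd (Fin.cons t p.1.1) 0)) p.1.2),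
          (isPoint_succ_iff_of_ne_zero ht (Fin.cons_zero _ _)).2 ⟨by simp, by simpa using p.2⟩,
          by simp⟩
      left_inv := ?_
      right_inv := fun p => by simp }
  rintro ⟨⟨x, y⟩, hp, rfl : x 0 = t⟩
  have hy := ((isPoint_succ_iff_of_ne_zero ht rfl).1 hp).1
  ext : 2 <;> simp only [← hy, Fin.cons_self_tail]

lemma card_fiber_zero_add_two (k : ℕ) {β : F} (hβ : β ≠ 0) :
    Nat.card {p : (Fin (k + 2) → F) × (Fin (k + 2) → F) // IsPoint (k + 2) β p ∧ p.1 0 = 0}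
      = Nat.card F * numPoints k (-β⁻¹) := by
  rw [numPoints, ← Nat.card_prod]
  refine Nat.card_congr
    { toFun := fun p => (p.1.2 0, ⟨(Fin.tail (Fin.tail p.1.1), Fin.tail (Fin.tail p.1.2)),
        ((isPoint_add_two_iff_of_eq_zero hβ p.2.2).1 p.2.1).2.2⟩)
      invFun := fun p =>
        ⟨(Fin.cons 0 (Fin.cons (-β⁻¹) p.2.1.1), Fin.cons p.1 (Fin.cons (-β) p.2.1.2)),
          (isPoint_add_two_iff_of_eq_zero hβ (by simp)).2 ⟨by simp, by simp, by simpa using p.2.2⟩,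
          by simp⟩
      left_inv := ?_
      right_inv := fun p => by simp }
  rintro ⟨⟨x, y⟩, hp, hx : x 0 = 0⟩
  obtain ⟨hx₁, hy₁, -⟩ := (isPoint_add_two_iff_of_eq_zero hβ hx).1 hp
  ext : 2 <;> simp only [← hx, ← hx₁, ← hy₁] <;>
    exact (congrArg (Fin.cons _) (Fin.cons_self_tail _)).trans (Fin.cons_self_tail _)

lemma card_fiber_zero_one (β : F) :
    Nat.card {p : (Fin 1 → F) × (Fin 1 → F) // IsPoint 1 β p ∧ p.1 0 = 0}
      = if β = -1 then Nat.card F else 0 := by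
  have isPoint_one_iff {x y : Fin 1 → F} : IsPoint 1 β (x, y) ↔ x 0 * y 0 = 1 + β := by
    rw [isPoint_succ_iff, neighborProd_pathGraph_one, mul_one]
    exact and_iff_left fun i => i.elim0
  split_ifs with hβ
  · refine Nat.card_congr
      { toFun := fun p => p.1.2 0
        invFun := fun c => ⟨(0, fun _ => c), isPoint_one_iff.2 (by simp [hβ]), rfl⟩
        left_inv := ?_
        right_inv := fun c => rfl }
    rintro ⟨⟨x, y⟩, -, hx⟩
    ext : 2
    all_goals funext i; rw [Subsingleton.elim i 0]
    exact hx.symm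
  · refine @Nat.card_of_isEmpty _ ⟨?_⟩
    rintro ⟨⟨x, y⟩, hp, hx : x 0 = 0⟩
    rw [isPoint_one_iff, hx, zero_mul, eq_comm, add_eq_zero_iff_neg_eq, eq_comm] at hp
    exact hβ hp

section Counting

variable [Fintype F]

lemma numPoints_succ (k : ℕ) (β : F) :
    numPoints (k + 1) β
      = Nat.card {p : (Fin (k + 1) → F) × (Fin (k + 1) → F) // IsPoint (k + 1) β p ∧ p.1 0 = 0}
        + ∑ t ∈ Finset.univ.erase (0 : F), numPoints k t := by
  rw [numPoints, Nat.card_subtype_eq_sum_card_fiber _ (fun p => p.1 0),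
    ← Finset.add_sum_erase _ _ (Finset.mem_univ 0)]
  exact congrArg _ <|
    Finset.sum_congr rfl fun t ht => card_fiber_of_ne_zero k β (Finset.ne_of_mem_erase ht)

local notation "q" => (Fintype.card F : ℤ)

lemma sum_erase_zero_const (c : ℤ) : ∑ _t ∈ Finset.univ.erase (0 : F), c = (q - 1) * c := by
  rw [Finset.sum_const, Finset.card_erase_of_mem (Finset.mem_univ 0), Finset.card_univ,
    nsmul_eq_mul, Nat.cast_sub Fintype.card_pos, Nat.cast_one]

lemma numPoints_one (β : F) : (numPoints 1 β : ℤ) = (q - 1) + if β = -1 then q else 0 := by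
  rw [numPoints_succ, card_fiber_zero_one, Nat.card_eq_fintype_card, add_comm]
  push_cast
  simp only [numPoints_zero, Nat.cast_one, sum_erase_zero_const, mul_one]

lemma numPoints_succ_succ (k : ℕ) {β : F} (hβ : β ≠ 0) :
    (numPoints (k + 1 + 1) β : ℤ)
      = q * numPoints k (-β⁻¹) +
          ∑ t ∈ Finset.univ.erase (0 : F), (numPoints (k + 1) t : ℤ) := by
  rw [numPoints_succ, card_fiber_zero_add_two k hβ, Nat.card_eq_fintype_card]
  push_cast
  rfl

theorem numPoints_mul_card_sq_sub_one (m : ℕ) :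
    (∀ β : F, β ≠ 0 → (numPoints (2 * m) β : ℤ) * (q ^ 2 - 1) = q ^ (2 * m + 2) - 1) ∧
      ∀ β : F, β ≠ 0 → (numPoints (2 * m + 1) β : ℤ) * (q ^ 2 - 1) =
        (q ^ (m + 1) - 1) * (q ^ (m + 2) - 1) +
          if β = (-1) ^ (m + 1) then (q ^ 2 - 1) * q ^ (m + 1) else 0 := by
  induction m with
  | zero =>
    refine ⟨fun β _ => by simp [numPoints_zero], fun β _ => ?_⟩
    rw [numPoints_one]
    simp only [zero_add, pow_one]
    split_ifs <;> ring
  | succ m ih =>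
    obtain ⟨ihEven, ihOdd⟩ := ih
    have hEven (β : F) (hβ : β ≠ 0) :
        (numPoints (2 * m + 1 + 1) β : ℤ) * (q ^ 2 - 1) = q ^ (2 * m + 4) - 1 := by
      have hs : (-1 : F) ^ (m + 1) ∈ Finset.univ.erase 0 :=
        Finset.mem_erase_of_ne_of_mem (pow_ne_zero _ (neg_ne_zero.2 one_ne_zero))
          (Finset.mem_univ _)
      rw [numPoints_succ_succ (2 * m) hβ, add_mul, mul_assoc, ihEven _ (by simpa), Finset.sum_mul,
        Finset.sum_congr rfl fun t ht => ihOdd t (Finset.ne_of_mem_erase ht),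
        Finset.sum_add_distrib, sum_erase_zero_const, Finset.sum_ite_eq', if_pos hs]
      ring
    refine ⟨hEven, fun β hβ => ?_⟩
    rw [show 2 * (m + 1) + 1 = 2 * m + 1 + 1 + 1 by ring, numPoints_succ_succ (2 * m + 1) hβ,
      add_mul, mul_assoc, ihOdd _ (by simpa), Finset.sum_mul,
      Finset.sum_congr rfl fun t ht => hEven t (Finset.ne_of_mem_erase ht), sum_erase_zero_const,
      if_congr (neg_inv_eq_neg_one_pow_iff_s12 β (m + 1)) rfl rfl]
    split_ifs <;> ring

end Counting

end TypeA

/-- For odd `n` and a fixed generic parameter `α` (`α ≠ 0` and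
`α ≠ (-1)^{(n+1)/2}`), the number of `F_q`-points of the generic variety of
type `A_n` is `(q^{(n+1)/2} - 1)(q^{(n+3)/2} - 1)/(q^2 - 1)`. -/
theorem card_typeA_odd_generic (F : Type) [Field F] [Fintype F] (n : ℕ)
    (hn : Odd n) (α : F) (h0 : α ≠ 0) (h1 : α ≠ (-1 : F) ^ ((n + 1) / 2)) :
    Nat.card {p : (Fin n → F) × (Fin n → F) //
        ∀ i : Fin n, p.1 i * p.2 i =
          1 + (if i.val = 0 then α else 1) *
            ∏ j ∈ Finset.univ.filter (fun j => (SimpleGraph.pathGraph n).Adj i j), p.1 j}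
      * (Fintype.card F ^ 2 - 1)
      = (Fintype.card F ^ ((n + 1) / 2) - 1) * (Fintype.card F ^ ((n + 3) / 2) - 1) := by
  obtain ⟨m, rfl⟩ := hn
  rw [show (2 * m + 1 + 1) / 2 = m + 1 by omega] at h1 ⊢
  rw [show (2 * m + 1 + 3) / 2 = m + 2 by omega]
  have key := (TypeA.numPoints_mul_card_sq_sub_one m).2 α h0
  rw [if_neg h1, add_zero] at key
  change TypeA.numPoints (2 * m + 1) α * _ = _
  have hq : 0 < Fintype.card F := Fintype.card_pos
  zify [Nat.one_le_pow 2 _ hq, Nat.one_le_pow (m + 1) _ hq, Nat.one_le_pow (m + 2) _ hq]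
  exact key
end

section
/- The variety Z_n defined over a field k by variables x_1,...,x_n, x_1',...,x_n', α and equations x_1 x_1' = 1 + α x_2, x_i x_i' = 1 + x_{i-1} x_{i+1} for 1 < i < n, and x_n x_n' = 1 + x_{n-1}, is isomorphic to affine space A^{n+1}; in particular it has exactly q^{n+1} points over F_q. -/
open scoped Classical

namespace ZnAux

variable {k : Type} [CommRing k]

/-- Extended `x`-sequence: `ext n x α j` represents `X_{j-1}` where
`X_{-1} = α`, `X_i = x_i` for `0 ≤ i < n`, `X_n = 1`, `X_{n+1} = 0`. -/
def ext (n : ℕ) (x : Fin n → k) (α : k) : ℕ → k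
  | 0 => α
  | j + 1 => if h : j < n then x ⟨j, h⟩ else if j = n then 1 else 0

@[simp] lemma ext_zero (n : ℕ) (x : Fin n → k) (α : k) : ext n x α 0 = α := rfl

lemma ext_succ (n : ℕ) (x : Fin n → k) (α : k) (j : ℕ) :
    ext n x α (j + 1) = if h : j < n then x ⟨j, h⟩ else if j = n then 1 else 0 := rfl

lemma ext_lt (n : ℕ) (x : Fin n → k) (α : k) (j : ℕ) (h : j < n) :
    ext n x α (j + 1) = x ⟨j, h⟩ := by
  rw [ext_succ, dif_pos h]

lemma ext_pred (n : ℕ) (x : Fin n → k) (α : k) (j : ℕ) (h0 : 0 < j) (h2 : j - 1 < n) :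
    ext n x α j = x ⟨j - 1, h2⟩ := by
  obtain ⟨m, rfl⟩ : ∃ m, j = m + 1 := ⟨j - 1, by omega⟩
  rw [ext_succ, dif_pos (by omega : m < n)]
  exact congrArg x (Fin.ext (by simp))

lemma ext_at_n (n : ℕ) (x : Fin n → k) (α : k) : ext n x α (n + 1) = 1 := by
  rw [ext_succ, dif_neg (lt_irrefl n), if_pos rfl]

lemma ext_top (n : ℕ) (x : Fin n → k) (α : k) : ext n x α (n + 2) = 0 := by
  rw [show n + 2 = (n + 1) + 1 from rfl, ext_succ, dif_neg (by omega), if_neg (by omega)]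

/-- Extended `x'`-sequence: `ext' n x' j = x'_j` for `j < n`, and `1` for `j = n`. -/
def ext' (n : ℕ) (x' : Fin n → k) (j : ℕ) : k :=
  if h : j < n then x' ⟨j, h⟩ else 1

lemma ext'_lt (n : ℕ) (x' : Fin n → k) (j : ℕ) (h : j < n) :
    ext' n x' j = x' ⟨j, h⟩ := by
  rw [ext', dif_pos h]

lemma ext'_at_n (n : ℕ) (x' : Fin n → k) : ext' n x' n = 1 := by
  rw [ext', dif_neg (lt_irrefl n)]

/-- `st n t s m = (X_{n+1-m}, X_{n-m}, X_{n-1-m}, X'_{n-m})`, constructing a solution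
downward from the far end, with free parameters `s = X_{n-1}` and `t`. -/
def st (n : ℕ) (t : ℕ → k) (s : k) : ℕ → k × k × k × k
  | 0 => (0, 1, s, 1)
  | m + 1 =>
      ((st n t s m).2.1, (st n t s m).2.2.1,
        -(st n t s m).2.2.2 + t (n - 1 - m) * (st n t s m).2.2.1,
        -(st n t s m).1 + t (n - 1 - m) * (st n t s m).2.1)

lemma st_inv (n : ℕ) (t : ℕ → k) (s : k) :
    ∀ m, (st n t s m).2.1 * (st n t s m).2.2.2
      - (st n t s m).1 * (st n t s m).2.2.1 = 1 := by
  intro m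
  induction m with
  | zero => simp [st]
  | succ m ih =>
      show (st n t s m).2.2.1 * (-(st n t s m).1 + t (n - 1 - m) * (st n t s m).2.1)
        - (st n t s m).2.1 * (-(st n t s m).2.2.2 + t (n - 1 - m) * (st n t s m).2.2.1) = 1
      linear_combination ih

lemma st_fst (n : ℕ) (t : ℕ → k) (s : k) (m : ℕ) :
    (st n t s (m + 1)).1 = (st n t s m).2.1 := rfl

lemma st_snd (n : ℕ) (t : ℕ → k) (s : k) (m : ℕ) :
    (st n t s (m + 1)).2.1 = (st n t s m).2.2.1 := rfl

/-- Product over the neighbours of `i` in the path graph. -/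
lemma prod_nbhd (n : ℕ) (x : Fin n → k) (i : Fin n) :
    ∏ j ∈ Finset.univ.filter (fun j => (SimpleGraph.pathGraph n).Adj i j), x j
      = (if h : i.val + 1 < n then x ⟨i.val + 1, h⟩ else 1) *
        (if h : 0 < i.val then x ⟨i.val - 1, lt_of_le_of_lt (Nat.pred_le _) i.isLt⟩ else 1) := by
  by_cases h1 : i.val + 1 < n
  · by_cases h2 : 0 < i.val
    · rw [dif_pos h1, dif_pos h2]
      have hs : Finset.univ.filter (fun j => (SimpleGraph.pathGraph n).Adj i j)
          = {(⟨i.val + 1, h1⟩ : Fin n),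
              ⟨i.val - 1, lt_of_le_of_lt (Nat.pred_le _) i.isLt⟩} := by
        ext j
        simp only [Finset.mem_filter, Finset.mem_univ, true_and,
          SimpleGraph.pathGraph_adj, Finset.mem_insert, Finset.mem_singleton, Fin.ext_iff]
        omega
      rw [hs, Finset.prod_pair (by simp only [ne_eq, Fin.ext_iff]; omega)]
    · rw [dif_pos h1, dif_neg h2]
      have hs : Finset.univ.filter (fun j => (SimpleGraph.pathGraph n).Adj i j)
          = {(⟨i.val + 1, h1⟩ : Fin n)} := by
        ext j
        simp only [Finset.mem_filter, Finset.mem_univ, true_and,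
          SimpleGraph.pathGraph_adj, Finset.mem_singleton, Fin.ext_iff]
        omega
      rw [hs, Finset.prod_singleton, mul_one]
  · by_cases h2 : 0 < i.val
    · rw [dif_neg h1, dif_pos h2]
      have hs : Finset.univ.filter (fun j => (SimpleGraph.pathGraph n).Adj i j)
          = {(⟨i.val - 1, lt_of_le_of_lt (Nat.pred_le _) i.isLt⟩ : Fin n)} := by
        ext j
        simp only [Finset.mem_filter, Finset.mem_univ, true_and,
          SimpleGraph.pathGraph_adj, Finset.mem_singleton, Fin.ext_iff]
        omega
      rw [hs, Finset.prod_singleton, one_mul]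
    · rw [dif_neg h1, dif_neg h2]
      have hs : Finset.univ.filter (fun j => (SimpleGraph.pathGraph n).Adj i j)
          = (∅ : Finset (Fin n)) := by
        ext j
        simp only [Finset.mem_filter, Finset.mem_univ, true_and,
          SimpleGraph.pathGraph_adj, Finset.notMem_empty, iff_false]
        omega
      rw [hs, Finset.prod_empty, mul_one]

/-- The predicate of the theorem. -/
def Eqs (n : ℕ) (p : (Fin n → k) × (Fin n → k) × k) : Prop :=
  ∀ i : Fin n, p.1 i * p.2.1 i =
    1 + (if i.val = 0 then p.2.2 else 1) *
      ∏ j ∈ Finset.univ.filter (fun j => (SimpleGraph.pathGraph n).Adj i j), p.1 j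

lemma rhs_eq (n : ℕ) (x : Fin n → k) (α : k) (i : Fin n) :
    (if i.val = 0 then α else 1) *
        ∏ j ∈ Finset.univ.filter (fun j => (SimpleGraph.pathGraph n).Adj i j), x j
      = ext n x α (i.val + 2) * ext n x α i.val := by
  rw [prod_nbhd]
  by_cases h1 : i.val + 1 < n
  · rw [dif_pos h1]
    have e2 : ext n x α (i.val + 2) = x ⟨i.val + 1, h1⟩ := by
      rw [show i.val + 2 = (i.val + 1) + 1 from rfl]
      exact ext_lt n x α (i.val + 1) h1
    rw [e2]
    by_cases h0 : i.val = 0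
    · rw [if_pos h0, dif_neg (by omega)]
      have e0 : ext n x α i.val = α := by rw [h0]; rfl
      rw [e0]; ring
    · rw [if_neg h0, dif_pos (by omega : 0 < i.val)]
      have e0 : ext n x α i.val
          = x ⟨i.val - 1, lt_of_le_of_lt (Nat.pred_le _) i.isLt⟩ :=
        ext_pred n x α i.val (by omega) _
      rw [e0]; ring
  · rw [dif_neg h1]
    have e2 : ext n x α (i.val + 2) = 1 := by
      rw [show i.val + 2 = (i.val + 1) + 1 from rfl, ext_succ,
        dif_neg (by omega), if_pos (by omega)]
    rw [e2]
    by_cases h0 : i.val = 0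
    · rw [if_pos h0, dif_neg (by omega)]
      have e0 : ext n x α i.val = α := by rw [h0]; rfl
      rw [e0]; ring
    · rw [if_neg h0, dif_pos (by omega : 0 < i.val)]
      have e0 : ext n x α i.val
          = x ⟨i.val - 1, lt_of_le_of_lt (Nat.pred_le _) i.isLt⟩ :=
        ext_pred n x α i.val (by omega) _
      rw [e0]; ring

lemma eqs_iff (n : ℕ) (p : (Fin n → k) × (Fin n → k) × k) :
    Eqs n p ↔ ∀ j : ℕ, ∀ _ : j < n,
      ext n p.1 p.2.2 (j + 1) * ext' n p.2.1 j
        = 1 + ext n p.1 p.2.2 (j + 2) * ext n p.1 p.2.2 j := by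
  have key : ∀ i : Fin n,
      (p.1 i * p.2.1 i =
        1 + (if i.val = 0 then p.2.2 else 1) *
          ∏ j ∈ Finset.univ.filter (fun j => (SimpleGraph.pathGraph n).Adj i j), p.1 j)
      ↔ (ext n p.1 p.2.2 (i.val + 1) * ext' n p.2.1 i.val
          = 1 + ext n p.1 p.2.2 (i.val + 2) * ext n p.1 p.2.2 i.val) := by
    intro i
    rw [← rhs_eq n p.1 p.2.2 i, ext_lt n p.1 p.2.2 i.val i.isLt,
      ext'_lt n p.2.1 i.val i.isLt]
  constructor
  · intro h j hj
    exact (key ⟨j, hj⟩).mp (h ⟨j, hj⟩)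
  · intro h i
    exact (key i).mpr (h i.val i.isLt)

/-- The extended system of equations, including the conventional one at `j = n`. -/
lemma eqs_ext (n : ℕ) (p : (Fin n → k) × (Fin n → k) × k) (hp : Eqs n p) :
    ∀ j : ℕ, j ≤ n →
      ext n p.1 p.2.2 (j + 1) * ext' n p.2.1 j
        = 1 + ext n p.1 p.2.2 (j + 2) * ext n p.1 p.2.2 j := by
  intro j hj
  rcases lt_or_eq_of_le hj with h | h
  · exact (eqs_iff n p).mp hp j h
  · subst h
    rw [ext_at_n, ext_top, ext'_at_n]
    ring

/-- The free-parameter function extracted from a vector `y`. -/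
def tt (n : ℕ) (y : Fin (n + 1) → k) : ℕ → k :=
  fun j => if h : j < n then y ⟨j, Nat.lt_succ_of_lt h⟩ else 0

/-- The inverse map: builds a solution from the free parameters. -/
def phi (n : ℕ) (y : Fin (n + 1) → k) : (Fin n → k) × (Fin n → k) × k :=
  (fun i => (st n (tt n y) (y (Fin.last n)) (n - 1 - i.val)).2.2.1,
   fun i => (st n (tt n y) (y (Fin.last n)) (n - i.val)).2.2.2,
   (st n (tt n y) (y (Fin.last n)) n).2.2.1)

/-- The forward map: reads off the free parameters of a solution. -/
def psi (n : ℕ) (p : (Fin n → k) × (Fin n → k) × k) : Fin (n + 1) → k :=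
  fun i =>
    if h : i.val < n then
      ext' n p.2.1 (i.val + 1) * ext' n p.2.1 i.val
        - ext n p.1 p.2.2 (i.val + 3) * ext n p.1 p.2.2 i.val
    else if h0 : 0 < n then p.1 ⟨n - 1, by omega⟩ else 0

section PhiLemmas

variable (n : ℕ) (y : Fin (n + 1) → k)

/-- `ext` of a constructed solution, for `j ≤ n`. -/
lemma ext_phi : ∀ j : ℕ, j ≤ n →
    ext n (phi n y).1 (phi n y).2.2 j
      = (st n (tt n y) (y (Fin.last n)) (n - j)).2.2.1 := by
  intro j hj
  match j with
  | 0 => rw [Nat.sub_zero]; rfl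
  | j + 1 =>
      rw [ext_lt n _ _ j (by omega)]
      show (st n (tt n y) (y (Fin.last n)) (n - 1 - j)).2.2.1 = _
      rw [show n - (j + 1) = n - 1 - j from by omega]

/-- `ext (j+2)` of a constructed solution equals the second component of the state. -/
lemma ext2_phi : ∀ j : ℕ, j < n →
    ext n (phi n y).1 (phi n y).2.2 (j + 2)
      = (st n (tt n y) (y (Fin.last n)) (n - 1 - j)).2.1 := by
  intro j hj
  by_cases h1 : j + 1 < n
  · rw [show j + 2 = (j + 1) + 1 from rfl, ext_lt n _ _ (j + 1) h1]
    show (st n (tt n y) (y (Fin.last n)) (n - 1 - (j + 1))).2.2.1 = _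
    rw [show n - 1 - j = (n - 1 - (j + 1)) + 1 from by omega, st_snd]
  · rw [show j + 2 = (j + 1) + 1 from rfl, ext_succ, dif_neg (by omega),
      if_pos (by omega : j + 1 = n), show n - 1 - j = 0 from by omega]
    rfl

/-- `ext (j+3)` of a constructed solution equals the first component of the state. -/
lemma ext3_phi : ∀ j : ℕ, j < n →
    ext n (phi n y).1 (phi n y).2.2 (j + 3)
      = (st n (tt n y) (y (Fin.last n)) (n - 1 - j)).1 := by
  intro j hj
  by_cases h1 : j + 2 < n
  · rw [show j + 3 = (j + 2) + 1 from rfl, ext_lt n _ _ (j + 2) h1]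
    show (st n (tt n y) (y (Fin.last n)) (n - 1 - (j + 2))).2.2.1 = _
    rw [show n - 1 - j = ((n - 1 - (j + 2)) + 1) + 1 from by omega, st_fst, st_snd]
  · by_cases h2 : j + 2 = n
    · rw [show j + 3 = (j + 2) + 1 from rfl, ext_succ, dif_neg (by omega), if_pos h2,
        show n - 1 - j = 1 from by omega, st_fst]
      rfl
    · rw [show j + 3 = (j + 2) + 1 from rfl, ext_succ, dif_neg (by omega),
        if_neg (by omega), show n - 1 - j = 0 from by omega]
      rfl

/-- `ext'` of a constructed solution, for `j ≤ n`. -/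
lemma ext'_phi : ∀ j : ℕ, j ≤ n →
    ext' n (phi n y).2.1 j = (st n (tt n y) (y (Fin.last n)) (n - j)).2.2.2 := by
  intro j hj
  rcases lt_or_eq_of_le hj with h | h
  · rw [ext'_lt n _ j h]
    rfl
  · subst h
    rw [ext'_at_n, Nat.sub_self]
    rfl

/-- The constructed point is a solution. -/
lemma phi_sat : Eqs n (phi n y) := by
  rw [eqs_iff]
  intro j hj
  have h1 : ext n (phi n y).1 (phi n y).2.2 (j + 1)
      = (st n (tt n y) (y (Fin.last n)) (n - 1 - j)).2.2.1 := by
    rw [ext_phi n y (j + 1) (by omega), show n - (j + 1) = n - 1 - j from by omega]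
  have h2 : ext' n (phi n y).2.1 j
      = (st n (tt n y) (y (Fin.last n)) ((n - 1 - j) + 1)).2.2.2 := by
    rw [ext'_phi n y j (le_of_lt hj), show n - j = (n - 1 - j) + 1 from by omega]
  have h3 := ext2_phi n y j hj
  have h4 : ext n (phi n y).1 (phi n y).2.2 j
      = (st n (tt n y) (y (Fin.last n)) ((n - 1 - j) + 1)).2.2.1 := by
    rw [ext_phi n y j (by omega), show n - j = (n - 1 - j) + 1 from by omega]
  rw [h1, h2, h3, h4]
  show (st n (tt n y) (y (Fin.last n)) (n - 1 - j)).2.2.1 *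
      (-(st n (tt n y) (y (Fin.last n)) (n - 1 - j)).1
        + tt n y (n - 1 - (n - 1 - j)) * (st n (tt n y) (y (Fin.last n)) (n - 1 - j)).2.1)
    = 1 + (st n (tt n y) (y (Fin.last n)) (n - 1 - j)).2.1 *
      (-(st n (tt n y) (y (Fin.last n)) (n - 1 - j)).2.2.2
        + tt n y (n - 1 - (n - 1 - j)) * (st n (tt n y) (y (Fin.last n)) (n - 1 - j)).2.2.1)
  linear_combination st_inv n (tt n y) (y (Fin.last n)) (n - 1 - j)

/-- Round trip 1: `psi ∘ phi = id`. -/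
lemma psi_phi (hn : 1 ≤ n) : psi n (phi n y) = y := by
  funext i
  by_cases h : i.val < n
  · simp only [psi]
    rw [dif_pos h]
    have h1 : ext' n (phi n y).2.1 (i.val + 1)
        = (st n (tt n y) (y (Fin.last n)) (n - 1 - i.val)).2.2.2 := by
      rw [ext'_phi n y (i.val + 1) (by omega),
        show n - (i.val + 1) = n - 1 - i.val from by omega]
    have h2 : ext' n (phi n y).2.1 i.val
        = (st n (tt n y) (y (Fin.last n)) ((n - 1 - i.val) + 1)).2.2.2 := by
      rw [ext'_phi n y i.val (le_of_lt h),
        show n - i.val = (n - 1 - i.val) + 1 from by omega]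
    have h3 := ext3_phi n y i.val h
    have h4 : ext n (phi n y).1 (phi n y).2.2 i.val
        = (st n (tt n y) (y (Fin.last n)) ((n - 1 - i.val) + 1)).2.2.1 := by
      rw [ext_phi n y i.val (by omega),
        show n - i.val = (n - 1 - i.val) + 1 from by omega]
    rw [h1, h2, h3, h4]
    have hti : tt n y (n - 1 - (n - 1 - i.val)) = y i := by
      rw [show n - 1 - (n - 1 - i.val) = i.val from by omega]
      simp only [tt]
      rw [dif_pos h]
    show (st n (tt n y) (y (Fin.last n)) (n - 1 - i.val)).2.2.2 *
        (-(st n (tt n y) (y (Fin.last n)) (n - 1 - i.val)).1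
          + tt n y (n - 1 - (n - 1 - i.val))
            * (st n (tt n y) (y (Fin.last n)) (n - 1 - i.val)).2.1)
      - (st n (tt n y) (y (Fin.last n)) (n - 1 - i.val)).1 *
        (-(st n (tt n y) (y (Fin.last n)) (n - 1 - i.val)).2.2.2
          + tt n y (n - 1 - (n - 1 - i.val))
            * (st n (tt n y) (y (Fin.last n)) (n - 1 - i.val)).2.2.1) = y i
    rw [hti]
    linear_combination (y i) * st_inv n (tt n y) (y (Fin.last n)) (n - 1 - i.val)
  · simp only [psi]
    rw [dif_neg h]
    have hn1 : 0 < n := by omega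
    rw [dif_pos hn1]
    have hi : i = Fin.last n := Fin.ext (by simp only [Fin.val_last]; omega)
    rw [hi]
    show (st n (tt n y) (y (Fin.last n)) (n - 1 - (n - 1))).2.2.1 = y (Fin.last n)
    rw [Nat.sub_self]
    rfl

end PhiLemmas

section PsiLemmas

variable (n : ℕ)

/-- Round trip 2: `phi ∘ psi = id` on solutions. -/
lemma phi_psi (hn : 1 ≤ n) (p : (Fin n → k) × (Fin n → k) × k) (hp : Eqs n p) :
    phi n (psi n p) = p := by
  have hext := eqs_ext n p hp
  have hsval : psi n p (Fin.last n) = ext n p.1 p.2.2 n := by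
    simp only [psi]
    rw [dif_neg (by simp only [Fin.val_last]; omega), dif_pos (by omega : 0 < n),
      ext_pred n p.1 p.2.2 n (by omega) (by omega)]
  have htval : ∀ j : ℕ, j < n → tt n (psi n p) j =
      ext' n p.2.1 (j + 1) * ext' n p.2.1 j
        - ext n p.1 p.2.2 (j + 3) * ext n p.1 p.2.2 j := by
    intro j hj
    simp only [tt]
    rw [dif_pos hj]
    simp only [psi]
    rw [dif_pos (show ((⟨j, Nat.lt_succ_of_lt hj⟩ : Fin (n + 1)) : ℕ) < n from hj)]
  -- main induction: the state reconstructs the extended sequences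
  have main : ∀ m : ℕ, m ≤ n →
      st n (tt n (psi n p)) (psi n p (Fin.last n)) m
        = (ext n p.1 p.2.2 (n + 2 - m), ext n p.1 p.2.2 (n + 1 - m),
            ext n p.1 p.2.2 (n - m), ext' n p.2.1 (n - m)) := by
    intro m
    induction m with
    | zero =>
        intro _
        show (0, 1, psi n p (Fin.last n), 1) = _
        rw [Nat.sub_zero, Nat.sub_zero, Nat.sub_zero, ext_top, ext_at_n, ext'_at_n, hsval]
    | succ m ih =>
        intro hm
        have ihm := ih (by omega)
        show ((st n (tt n (psi n p)) (psi n p (Fin.last n)) m).2.1,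
            (st n (tt n (psi n p)) (psi n p (Fin.last n)) m).2.2.1,
            -(st n (tt n (psi n p)) (psi n p (Fin.last n)) m).2.2.2
              + tt n (psi n p) (n - 1 - m)
                * (st n (tt n (psi n p)) (psi n p (Fin.last n)) m).2.2.1,
            -(st n (tt n (psi n p)) (psi n p (Fin.last n)) m).1
              + tt n (psi n p) (n - 1 - m)
                * (st n (tt n (psi n p)) (psi n p (Fin.last n)) m).2.1) = _
        rw [ihm]
        have hti := htval (n - 1 - m) (by omega)
        have heq1 := hext (n - 1 - m) (by omega)
        have heq2 : ext n p.1 p.2.2 (n - 1 - m + 2) * ext' n p.2.1 (n - 1 - m + 1)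
            = 1 + ext n p.1 p.2.2 (n - 1 - m + 3) * ext n p.1 p.2.2 (n - 1 - m + 1) := by
          have h := hext (n - 1 - m + 1) (by omega)
          rwa [show n - 1 - m + 1 + 1 = n - 1 - m + 2 from by omega,
            show n - 1 - m + 1 + 2 = n - 1 - m + 3 from by omega] at h
        refine Prod.ext ?_ (Prod.ext ?_ (Prod.ext ?_ ?_)) <;> simp only
        · rw [show n + 2 - (m + 1) = n + 1 - m from by omega]
        · rw [show n + 1 - (m + 1) = n - m from by omega]
        · rw [show n - (m + 1) = n - 1 - m from by omega,
            show n - m = n - 1 - m + 1 from by omega, hti]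
          linear_combination ext' n p.2.1 (n - 1 - m + 1) * heq1
            + ext n p.1 p.2.2 (n - 1 - m) * heq2
        · rw [show n - (m + 1) = n - 1 - m from by omega,
            show n + 2 - m = n - 1 - m + 3 from by omega,
            show n + 1 - m = n - 1 - m + 2 from by omega, hti]
          linear_combination ext n p.1 p.2.2 (n - 1 - m + 3) * heq1
            + ext' n p.2.1 (n - 1 - m) * heq2
  -- now read off the components
  refine Prod.ext ?_ (Prod.ext ?_ ?_)
  · funext i
    show (st n (tt n (psi n p)) (psi n p (Fin.last n)) (n - 1 - i.val)).2.2.1 = p.1 i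
    rw [main (n - 1 - i.val) (by omega),
      show n - (n - 1 - i.val) = i.val + 1 from by omega]
    simp only
    rw [ext_lt n p.1 p.2.2 i.val i.isLt]
  · funext i
    show (st n (tt n (psi n p)) (psi n p (Fin.last n)) (n - i.val)).2.2.2 = p.2.1 i
    rw [main (n - i.val) (by omega),
      show n - (n - i.val) = i.val from by omega]
    simp only
    rw [ext'_lt n p.2.1 i.val i.isLt]
  · show (st n (tt n (psi n p)) (psi n p (Fin.last n)) n).2.2.1 = p.2.2
    rw [main n (le_refl n), Nat.sub_self]
    rfl

end PsiLemmas

/-- The bijection. -/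
noncomputable def theEquiv (n : ℕ) (hn : 1 ≤ n) (k : Type) [CommRing k] :
    {p : (Fin n → k) × (Fin n → k) × k // Eqs n p} ≃ (Fin (n + 1) → k) where
  toFun p := psi n p.1
  invFun y := ⟨phi n y, phi_sat n y⟩
  left_inv p := Subtype.ext (phi_psi n hn p.1 p.2)
  right_inv y := psi_phi n y hn

end ZnAux

/-- The variety `Z_n` (type `A_n` equations with the coefficient `α` at the
first vertex treated as a free variable, no invertibility conditions) is
isomorphic to affine space `A^{n+1}`; in particular it has `q^{n+1}` points
over a finite field with `q` elements. -/
theorem Zn_iso_affine_space (n : ℕ) (hn : 1 ≤ n)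
    (k : Type) [Field k] (F : Type) [Field F] [Fintype F] :
    Nonempty ({p : (Fin n → k) × (Fin n → k) × k //
        ∀ i : Fin n, p.1 i * p.2.1 i =
          1 + (if i.val = 0 then p.2.2 else 1) *
            ∏ j ∈ Finset.univ.filter (fun j => (SimpleGraph.pathGraph n).Adj i j), p.1 j}
      ≃ (Fin (n + 1) → k)) ∧
    Nat.card {p : (Fin n → F) × (Fin n → F) × F //
        ∀ i : Fin n, p.1 i * p.2.1 i =
          1 + (if i.val = 0 then p.2.2 else 1) *
            ∏ j ∈ Finset.univ.filter (fun j => (SimpleGraph.pathGraph n).Adj i j), p.1 j}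
      = Fintype.card F ^ (n + 1) := by
  constructor
  · exact ⟨ZnAux.theEquiv n hn k⟩
  · have h1 := Nat.card_congr (ZnAux.theEquiv n hn F)
    have h2 : Nat.card (Fin (n + 1) → F) = Fintype.card F ^ (n + 1) := by
      simp [Nat.card_eq_fintype_card]
    exact h1.trans h2
end
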